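/- Let G be a prime graph of twin-width 1 with realiser (σ, τ), and let G_n, …, G_1 be any 1-contraction sequence of G. Then the two vertices u, v contracted in the first contraction (from G_n to G_{n-1}) satisfy: for one ordering π ∈ {σ, τ}, |π(u) − π(v)| = 1 (they are consecutive), and for the other ordering π′, |π′(u) − π′(v)| = 2 (exactly one vertex lies strictly between them). -/

import Mathlib

/-!
Since `G` is prime, some vertex `w` splits `{u, v}`, and as the part `{u, v}` of `G_{n-1}` has
red degree at most one, `w` is the only such vertex. In the permutation diagram a vertex splits
`{u, v}` exactly when it lies between `u` and `v` in one of the two orders but not in the other.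

If no vertex lies between `u` and `v` in both orders, then `w` is the only vertex between them
in one order and nothing lies between them in the other, which gives the distances `2` and `1`.

Otherwise the vertices between `u` and `v` in both orders form a box `R`, and `{u, v} ∪ R` is a
module of `G - w`. With red degrees at most one, the red edge `{u, v}{w}` can only disappear when
one end absorbs a vertex that is its twin outside `{u, v, w}`, or when the two ends merge while at
most one vertex splits `{u, v, w}`. Primality, applied to modules built from the box, rules out
each of these, so the red edge survives down to `G_1`, which has a single vertex.
-/

open Finset

/-- Two vertex sets are *homogeneous* in `G` if they are complete or anticomplete
to each other. A red edge of a trigraph in a contraction sequence joins two parts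
that are not homogeneous. -/
def Homogeneous {V : Type*} (G : SimpleGraph V) (X Y : Finset V) : Prop :=
  (∀ x ∈ X, ∀ y ∈ Y, G.Adj x y) ∨ (∀ x ∈ X, ∀ y ∈ Y, ¬ G.Adj x y)

/-- A contraction sequence of a graph on vertex type `V` (with `n = Fintype.card V`),
encoded by the partitions of `V` into the parts of the trigraphs `G_n, …, G_1`:
`parts i` is the partition whose blocks are the parts of the vertices of `G_i`.
`G_n` is the discrete partition, and `G_i` is obtained from `G_{i+1}` by merging two parts. -/
structure ContractionSeq (V : Type*) [Fintype V] [DecidableEq V] where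
  parts : ℕ → Finpartition (Finset.univ : Finset V)
  parts_card : ∀ i, 1 ≤ i → i ≤ Fintype.card V → (parts i).parts.card = i
  parts_top : ∀ X ∈ (parts (Fintype.card V)).parts, X.card = 1
  merge : ∀ i, 1 ≤ i → i < Fintype.card V →
    ∃ X ∈ (parts (i + 1)).parts, ∃ Y ∈ (parts (i + 1)).parts, X ≠ Y ∧
      (parts i).parts = insert (X ∪ Y) ((((parts (i + 1)).parts).erase X).erase Y)

/-- Every part of the partition `P` (i.e. every vertex of the corresponding trigraph)
is incident to at most `d` red edges. -/
def RedDegLE {V : Type*} [Fintype V] [DecidableEq V] (G : SimpleGraph V)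
    (P : Finpartition (Finset.univ : Finset V)) (d : ℕ) : Prop :=
  ∀ X ∈ P.parts, {Y | Y ∈ P.parts ∧ Y ≠ X ∧ ¬ Homogeneous G X Y}.ncard ≤ d

/-- `C` is a `d`-sequence of `G`: every trigraph in it has maximum red degree at most `d`. -/
def IsDSeq {V : Type*} [Fintype V] [DecidableEq V] (G : SimpleGraph V)
    (C : ContractionSeq V) (d : ℕ) : Prop :=
  ∀ i, 1 ≤ i → i ≤ Fintype.card V → RedDegLE G (C.parts i) d

/-- The twin-width of `G`: the least `d` such that `G` has a `d`-sequence. -/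
noncomputable def tww {V : Type*} [Fintype V] [DecidableEq V] (G : SimpleGraph V) : ℕ :=
  sInf {d | ∃ C : ContractionSeq V, IsDSeq G C d}

/-- `(σ, τ)` is a realiser of `G` as a permutation graph. -/
def IsRealiser {V : Type*} [Fintype V] (G : SimpleGraph V)
    (σ τ : V ≃ Fin (Fintype.card V)) : Prop :=
  ∀ u v : V, G.Adj u v ↔ ((σ u < σ v ∧ τ v < τ u) ∨ (σ v < σ u ∧ τ u < τ v))

/-- `G` is a permutation graph. -/
def IsPermutationGraph {V : Type*} [Fintype V] (G : SimpleGraph V) : Prop :=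
  ∃ σ τ : V ≃ Fin (Fintype.card V), IsRealiser G σ τ

/-- `I` is an interval for the ordering `σ` (its image is a set of consecutive integers,
equivalently it is convex). -/
def IsIntervalFor {V : Type*} {n : ℕ} (σ : V ≃ Fin n) (I : Set V) : Prop :=
  ∀ u v w : V, u ∈ I → w ∈ I → σ u ≤ σ v → σ v ≤ σ w → v ∈ I

/-- `M` is a module of `G`. -/
def IsModule {V : Type*} (G : SimpleGraph V) (M : Set V) : Prop :=
  ∀ v ∉ M, (∀ m ∈ M, G.Adj v m) ∨ (∀ m ∈ M, ¬ G.Adj v m)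

/-- `G` is prime (w.r.t. modules): all its modules are trivial. -/
def IsPrimeGraph {V : Type*} (G : SimpleGraph V) : Prop :=
  ∀ M : Set V, IsModule G M → M.Subsingleton ∨ M = Set.univ

/-- `M` is a strong module of `G`. -/
def IsStrongModule {V : Type*} (G : SimpleGraph V) (M : Set V) : Prop :=
  IsModule G M ∧ ∀ M' : Set V, IsModule G M' → M ⊆ M' ∨ M' ⊆ M ∨ M ∩ M' = ∅

/-- The underlying graph of the trigraph corresponding to the partition `P` in a
contraction sequence of `G`: parts `X ≠ Y` are adjacent (by a black or red edge)
iff some edge of `G` joins them. -/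
def QuotientGraph {V : Type*} [Fintype V] [DecidableEq V] (G : SimpleGraph V)
    (P : Finpartition (Finset.univ : Finset V)) :
    SimpleGraph {X : Finset V // X ∈ P.parts} where
  Adj X Y := X ≠ Y ∧ ∃ x ∈ X.1, ∃ y ∈ Y.1, G.Adj x y
  symm := by
    constructor
    rintro X Y ⟨hne, x, hx, y, hy, hadj⟩
    exact ⟨hne.symm, y, hy, x, hx, hadj.symm⟩
  loopless := by constructor; rintro X ⟨hne, -⟩; exact hne rfl

/-- `w` lies strictly between `a` and `b` in the ordering `σ`. -/
def StrictlyBetween {V : Type*} {n : ℕ} (σ : V ≃ Fin n) (a w b : V) : Prop :=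
  (σ a < σ w ∧ σ w < σ b) ∨ (σ b < σ w ∧ σ w < σ a)

/-- `G` is distance-hereditary. -/
def DistanceHereditary {V : Type*} (G : SimpleGraph V) : Prop :=
  ∀ S : Set V, (G.induce S).Connected →
    ∀ u v : S, (G.induce S).dist u v = G.dist ↑u ↑v

/-- There is a path from `a` to `b` in `G` containing no vertex equal or adjacent to `c`. -/
def AvoidingPath {V : Type*} (G : SimpleGraph V) (a b c : V) : Prop :=
  ∃ w : G.Walk a b, w.IsPath ∧ ∀ v ∈ w.support, v ≠ c ∧ ¬ G.Adj c v

/-- `x, y, z` form an asteroidal triple of `G`. -/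
def AsteroidalTriple {V : Type*} (G : SimpleGraph V) (x y z : V) : Prop :=
  x ≠ y ∧ y ≠ z ∧ x ≠ z ∧
    AvoidingPath G x y z ∧ AvoidingPath G y z x ∧ AvoidingPath G x z y

/-- `G` is asteroidal triple-free. -/
def ATFree {V : Type*} (G : SimpleGraph V) : Prop :=
  ∀ x y z : V, ¬ AsteroidalTriple G x y z

/-- `G` is a cograph: it has no induced path on four vertices. -/
def IsCograph {V : Type*} (G : SimpleGraph V) : Prop :=
  IsEmpty (SimpleGraph.pathGraph 4 ↪g G)

section TwinWidthOne

variable {V : Type*}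

section Graph

variable {G : SimpleGraph V}

theorem Homogeneous.symm {X Y : Finset V} (h : Homogeneous G X Y) : Homogeneous G Y X := by
  rcases h with h | h
  · exact Or.inl fun y hy x hx => (h x hx y hy).symm
  · exact Or.inr fun y hy x hx hyx => h x hx y hy hyx.symm

theorem Homogeneous.mono {X X' Y Y' : Finset V} (h : Homogeneous G X Y) (hX : X' ⊆ X)
    (hY : Y' ⊆ Y) : Homogeneous G X' Y' := by
  rcases h with h | h
  · exact Or.inl fun x hx y hy => h x (hX hx) y (hY hy)
  · exact Or.inr fun x hx y hy => h x (hX hx) y (hY hy)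

theorem Homogeneous.adj_iff {X Y : Finset V} (h : Homogeneous G X Y) {x x' y y' : V}
    (hx : x ∈ X) (hx' : x' ∈ X) (hy : y ∈ Y) (hy' : y' ∈ Y) : G.Adj x y ↔ G.Adj x' y' := by
  rcases h with h | h
  · exact iff_of_true (h x hx y hy) (h x' hx' y' hy')
  · exact iff_of_false (h x hx y hy) (h x' hx' y' hy')

theorem homogeneous_singleton (a b : V) : Homogeneous G {a} {b} := by
  by_cases h : G.Adj a b
  · exact Or.inl (by simpa using h)
  · exact Or.inr (by simpa using h)

theorem homogeneous_pair_singleton_iff [DecidableEq V] {u v z : V} :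
    Homogeneous G {u, v} {z} ↔ (G.Adj z u ↔ G.Adj z v) := by
  simp only [Homogeneous, mem_insert, mem_singleton, forall_eq_or_imp, forall_eq,
    G.adj_comm z]
  tauto

theorem isModule_of_forall_adj_iff {M : Set V} {a : V}
    (h : ∀ z ∉ M, ∀ m ∈ M, G.Adj z m ↔ G.Adj z a) : IsModule G M := by
  intro z hz
  by_cases hza : G.Adj z a
  · exact Or.inl fun m hm => (h z hz m hm).mpr hza
  · exact Or.inr fun m hm hzm => hza ((h z hz m hm).mp hzm)

theorem isModule_pair {a b : V} (h : ∀ z, z ≠ a → z ≠ b → (G.Adj z a ↔ G.Adj z b)) :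
    IsModule G {a, b} := by
  refine isModule_of_forall_adj_iff (a := a) fun z hz m hm => ?_
  simp only [Set.mem_insert_iff, Set.mem_singleton_iff, not_or] at hz hm
  rcases hm with rfl | rfl
  exacts [Iff.rfl, (h z hz.1 hz.2).symm]

theorem IsPrimeGraph.not_isModule (hG : IsPrimeGraph G) {M : Set V} {a b c : V} (ha : a ∈ M)
    (hb : b ∈ M) (hab : a ≠ b) (hc : c ∉ M) : ¬ IsModule G M := fun hM =>
  (hG M hM).elim (fun h => hab (h ha hb)) (fun h => hc (h ▸ Set.mem_univ c))

theorem IsPrimeGraph.eq_singleton_of_isModule (hG : IsPrimeGraph G) {F : Finset V} {f c : V}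
    (hM : IsModule G (F : Set V)) (hf : f ∈ F) (hc : c ∉ F) : F = {f} :=
  eq_singleton_iff_unique_mem.mpr ⟨hf, fun _ hg => by_contra fun hgf =>
    hG.not_isModule (mem_coe.mpr hg) (mem_coe.mpr hf) hgf (mem_coe.not.mpr hc) hM⟩

theorem IsPrimeGraph.exists_splitter [Fintype V] [DecidableEq V] (hG : IsPrimeGraph G)
    {u v : V} (huv : u ≠ v) (h3 : 3 ≤ Fintype.card V) :
    ∃ w, w ≠ u ∧ w ≠ v ∧ ¬ (G.Adj w u ↔ G.Adj w v) := by
  obtain ⟨c, -, hc⟩ := exists_mem_notMem_of_card_lt_card (s := {u, v}) (t := univ)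
    (by rw [card_pair huv, card_univ]; omega)
  by_contra! h
  refine hG.not_isModule (Set.mem_insert u {v}) (Set.mem_insert_of_mem u rfl) huv (c := c)
    (by simpa using hc) (isModule_pair h)

def splitters (G : SimpleGraph V) (S : Finset V) : Set V :=
  {z | z ∉ S ∧ ¬ Homogeneous G S {z}}

theorem mem_splitters {S : Finset V} {z a b : V} (hz : z ∉ S) (ha : a ∈ S) (hb : b ∈ S)
    (h : ¬ (G.Adj z a ↔ G.Adj z b)) : z ∈ splitters G S := by
  refine ⟨hz, fun hS => h ?_⟩
  rw [G.adj_comm z a, G.adj_comm z b]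
  exact hS.adj_iff ha hb (mem_singleton_self z) (mem_singleton_self z)

end Graph

section Partition

variable [DecidableEq V] {G : SimpleGraph V} {A B F T X Y : Finset V}

theorem Finpartition.notMem_of_ne {S : Finset V} {P : Finpartition S} {x : V} (hT : T ∈ P.parts)
    (hA : A ∈ P.parts) (hTA : T ≠ A) (hx : x ∈ T) : x ∉ A := fun hxA =>
  hTA (P.eq_of_mem_parts hT hA hx hxA)

theorem Finpartition.ne_union_of_ne {S : Finset V} {P : Finpartition S} (hT : T ∈ P.parts)
    (hA : A ∈ P.parts) (hTA : T ≠ A) (F : Finset V) : T ≠ A ∪ F := by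
  rintro rfl
  obtain ⟨a, ha⟩ := P.nonempty_of_mem_parts hA
  exact P.notMem_of_ne hA hT (Ne.symm hTA) ha (mem_union_left F ha)

def CanAbsorb (G : SimpleGraph V) (A B : Finset V) : Prop :=
  ∃ f ∉ A ∪ B, ∀ a ∈ A, ∀ z ∉ A ∪ B, z ≠ f → (G.Adj z a ↔ G.Adj z f)

/-- In a `1`-sequence of a prime graph, a red edge between parts `A` and `B` can only be
destroyed by `A` (or `B`) absorbing a vertex that is its twin outside `A ∪ B`, or by merging
`A` and `B` when at most one vertex splits `A ∪ B`; a frozen pair admits none of these. -/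
def IsFrozenPair (G : SimpleGraph V) (A B : Finset V) : Prop :=
  ¬ CanAbsorb G A B ∧ ¬ CanAbsorb G B A ∧ (splitters G (A ∪ B)).Nontrivial

variable [Fintype V] {P Q : Finpartition (univ : Finset V)}

theorem Finpartition.isModule_of_homogeneous (h : ∀ T ∈ P.parts, T ≠ F → Homogeneous G T F) :
    IsModule G (F : Set V) := by
  intro z hz
  obtain ⟨T, hT, hzT⟩ := P.exists_mem (mem_univ z)
  rcases h T hT fun hTF => hz (hTF ▸ hzT) with h | h
  · exact Or.inl fun m hm => h z hzT m hm
  · exact Or.inr fun m hm => h z hzT m hm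

theorem RedDegLE.eq_of_not_homogeneous {Z : Finset V} (hP : RedDegLE G P 1) (hX : X ∈ P.parts)
    (hY : Y ∈ P.parts) (hZ : Z ∈ P.parts) (hYX : Y ≠ X) (hZX : Z ≠ X)
    (hXY : ¬ Homogeneous G X Y) (hXZ : ¬ Homogeneous G X Z) : Y = Z :=
  (Set.ncard_le_one).mp (hP X hX) _ ⟨hY, hYX, hXY⟩ _ ⟨hZ, hZX, hXZ⟩

theorem RedDegLE.homogeneous_of_ne {Z : Finset V} (hP : RedDegLE G P 1) (hX : X ∈ P.parts)
    (hY : Y ∈ P.parts) (hYX : Y ≠ X) (hXY : ¬ Homogeneous G X Y) (hZ : Z ∈ P.parts)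
    (hZX : Z ≠ X) (hZY : Z ≠ Y) : Homogeneous G X Z :=
  by_contra fun hXZ => hZY (hP.eq_of_not_homogeneous hX hY hZ hYX hZX hXY hXZ).symm

/-- `F` is also homogeneous to `A` and `B`, whose only red edge is `AB`, so it is a module. -/
theorem RedDegLE.eq_singleton_of_homogeneous (hG : IsPrimeGraph G) (hP : RedDegLE G P 1)
    (hA : A ∈ P.parts) (hB : B ∈ P.parts) (hF : F ∈ P.parts) (hAB : A ≠ B)
    (hred : ¬ Homogeneous G A B) (hFA : F ≠ A) (hFB : F ≠ B)
    (h : ∀ T ∈ P.parts, T ≠ A → T ≠ B → T ≠ F → Homogeneous G T F) : ∃ f, F = {f} := by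
  have hmod : IsModule G (F : Set V) := P.isModule_of_homogeneous fun T hT hTF => by
    by_cases hTA : T = A
    · subst hTA
      exact hP.homogeneous_of_ne hA hB hAB.symm hred hF hFA hFB
    by_cases hTB : T = B
    · subst hTB
      exact hP.homogeneous_of_ne hB hA hAB (fun h => hred h.symm) hF hFB hFA
    exact h T hT hTA hTB hTF
  obtain ⟨f, hf⟩ := P.nonempty_of_mem_parts hF
  obtain ⟨a, ha⟩ := P.nonempty_of_mem_parts hA
  exact ⟨f, hG.eq_singleton_of_isModule hmod hf (P.notMem_of_ne hA hF (Ne.symm hFA) ha)⟩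

def IsMerge (P Q : Finpartition (univ : Finset V)) (X Y : Finset V) : Prop :=
  Q.parts = insert (X ∪ Y) ((P.parts.erase X).erase Y)

namespace IsMerge

theorem union_mem (h : IsMerge P Q X Y) : X ∪ Y ∈ Q.parts := by
  rw [h]
  exact mem_insert_self _ _

theorem mem_parts (h : IsMerge P Q X Y) (hT : T ∈ P.parts) (hTX : T ≠ X) (hTY : T ≠ Y) :
    T ∈ Q.parts := by
  rw [h]
  exact mem_insert_of_mem (mem_erase.mpr ⟨hTY, mem_erase.mpr ⟨hTX, hT⟩⟩)

theorem mem_parts_of_ne_union (h : IsMerge P Q X Y) (hT : T ∈ Q.parts) (hTXY : T ≠ X ∪ Y) :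
    T ∈ P.parts := by
  rw [h, mem_insert] at hT
  exact mem_of_mem_erase (mem_of_mem_erase (hT.resolve_left hTXY))

theorem symm (h : IsMerge P Q X Y) : IsMerge P Q Y X := by
  rw [IsMerge, union_comm, erase_right_comm]
  exact h

theorem canAbsorb (hG : IsPrimeGraph G) (hP : RedDegLE G P 1) (hQ : RedDegLE G Q 1)
    (hA : A ∈ P.parts) (hB : B ∈ P.parts) (hF : F ∈ P.parts) (hAB : A ≠ B)
    (hred : ¬ Homogeneous G A B) (hFA : F ≠ A) (hFB : F ≠ B) (hm : IsMerge P Q A F) :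
    CanAbsorb G A B := by
  have hBQ : B ∈ Q.parts := hm.mem_parts hB hAB.symm hFB.symm
  have hB' : B ≠ A ∪ F := P.ne_union_of_ne hB hA hAB.symm F
  have hredQ : ¬ Homogeneous G (A ∪ F) B := fun h => hred (h.mono subset_union_left subset_rfl)
  have hout : ∀ T ∈ P.parts, T ≠ A → T ≠ B → T ≠ F → Homogeneous G (A ∪ F) T :=
    fun T hT hTA hTB hTF => hQ.homogeneous_of_ne hm.union_mem hBQ hB' hredQ
      (hm.mem_parts hT hTA hTF) (P.ne_union_of_ne hT hA hTA F) hTB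
  obtain ⟨f, rfl⟩ := hP.eq_singleton_of_homogeneous hG hA hB hF hAB hred hFA hFB
    fun T hT hTA hTB hTF => ((hout T hT hTA hTB hTF).mono subset_union_right subset_rfl).symm
  have hf : f ∈ ({f} : Finset V) := mem_singleton_self f
  refine ⟨f, ?_, fun a ha z hz hzf => ?_⟩
  · rw [mem_union, not_or]
    exact ⟨P.notMem_of_ne hF hA hFA hf, P.notMem_of_ne hF hB hFB hf⟩
  obtain ⟨T, hT, hzT⟩ := P.exists_mem (mem_univ z)
  rw [mem_union, not_or] at hz
  have hTF : T ≠ {f} := fun h => hzf (mem_singleton.mp (h ▸ hzT))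
  rw [G.adj_comm z a, G.adj_comm z f]
  exact (hout T hT (fun h => hz.1 (h ▸ hzT)) (fun h => hz.2 (h ▸ hzT)) hTF).adj_iff
    (mem_union_left _ ha) (mem_union_right A hf) hzT hzT

theorem splitters_subsingleton (hG : IsPrimeGraph G) (hP : RedDegLE G P 1)
    (hQ : RedDegLE G Q 1) (hA : A ∈ P.parts) (hB : B ∈ P.parts) (hAB : A ≠ B)
    (hred : ¬ Homogeneous G A B) (hm : IsMerge P Q A B) : (splitters G (A ∪ B)).Subsingleton := by
  have part_of_splitter : ∀ y ∈ splitters G (A ∪ B), ∃ T ∈ P.parts, y ∈ T ∧ T ≠ A ∧ T ≠ B ∧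
      T ∈ Q.parts ∧ T ≠ A ∪ B ∧ ¬ Homogeneous G T (A ∪ B) := by
    rintro y ⟨hy, hsplit⟩
    obtain ⟨T, hT, hyT⟩ := P.exists_mem (mem_univ y)
    rw [mem_union, not_or] at hy
    have hTA : T ≠ A := fun h => hy.1 (h ▸ hyT)
    have hTB : T ≠ B := fun h => hy.2 (h ▸ hyT)
    exact ⟨T, hT, hyT, hTA, hTB, hm.mem_parts hT hTA hTB, P.ne_union_of_ne hT hA hTA B,
      fun h => hsplit (h.symm.mono subset_rfl (singleton_subset_iff.mpr hyT))⟩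
  intro y hy y' hy'
  obtain ⟨T, hT, hyT, hTA, hTB, hTQ, hTAB, hredT⟩ := part_of_splitter y hy
  obtain ⟨T', -, hyT', -, -, hT'Q, hT'AB, hredT'⟩ := part_of_splitter y' hy'
  have hTT' : T = T' := hQ.eq_of_not_homogeneous hm.union_mem hTQ hT'Q hTAB hT'AB
    (fun h => hredT h.symm) (fun h => hredT' h.symm)
  subst hTT'
  obtain ⟨t, rfl⟩ := hP.eq_singleton_of_homogeneous hG hA hB hT hAB hred hTA hTB
    fun S hS hSA hSB hST => (hQ.homogeneous_of_ne hTQ hm.union_mem (Ne.symm hTAB) hredT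
      (hm.mem_parts hS hSA hSB) hST (P.ne_union_of_ne hS hA hSA B)).symm
  exact (mem_singleton.mp hyT).trans (mem_singleton.mp hyT').symm

end IsMerge

end Partition

section Sequence

variable [Fintype V] [DecidableEq V] {G : SimpleGraph V} {C : ContractionSeq V} {A B : Finset V}

theorem ContractionSeq.exists_isMerge (C : ContractionSeq V) {i : ℕ} (hi : 1 ≤ i)
    (hin : i < Fintype.card V) : ∃ X ∈ (C.parts (i + 1)).parts, ∃ Y ∈ (C.parts (i + 1)).parts,
      X ≠ Y ∧ IsMerge (C.parts (i + 1)) (C.parts i) X Y :=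
  C.merge i hi hin

theorem IsDSeq.mem_parts_of_isFrozenPair (hC : IsDSeq G C 1) (hG : IsPrimeGraph G) {i : ℕ}
    (hi : 1 ≤ i) (hin : i < Fintype.card V) (hA : A ∈ (C.parts (i + 1)).parts)
    (hB : B ∈ (C.parts (i + 1)).parts) (hAB : A ≠ B) (hred : ¬ Homogeneous G A B)
    (hfrozen : IsFrozenPair G A B) : A ∈ (C.parts i).parts ∧ B ∈ (C.parts i).parts := by
  have hP := hC (i + 1) (by omega) hin
  have hQ := hC i hi hin.le
  have no_absorb : ∀ {X F}, X ∈ (C.parts (i + 1)).parts → F ∈ (C.parts (i + 1)).parts →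
      IsMerge (C.parts (i + 1)) (C.parts i) X F → X = A ∨ X = B → F ≠ A → F ≠ B → False := by
    rintro X F hX hF hm (rfl | rfl) hFA hFB
    · exact hfrozen.1 (hm.canAbsorb hG hP hQ hX hB hF hAB hred hFA hFB)
    · exact hfrozen.2.1 (hm.canAbsorb hG hP hQ hX hA hF hAB.symm (fun h => hred h.symm) hFB hFA)
  obtain ⟨X, hX, Y, hY, hXY, hm⟩ := C.exists_isMerge hi hin
  by_cases hXAB : X = A ∨ X = B <;> by_cases hYAB : Y = A ∨ Y = B
  · refine absurd ?_ hfrozen.2.2.not_subsingleton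
    rcases hXAB with rfl | rfl <;> rcases hYAB with rfl | rfl
    · exact absurd rfl hXY
    · exact hm.splitters_subsingleton hG hP hQ hA hB hAB hred
    · exact hm.symm.splitters_subsingleton hG hP hQ hA hB hAB hred
    · exact absurd rfl hXY
  · push Not at hYAB
    exact (no_absorb hX hY hm hXAB hYAB.1 hYAB.2).elim
  · push Not at hXAB
    exact (no_absorb hY hX hm.symm hYAB hXAB.1 hXAB.2).elim
  · push Not at hXAB hYAB
    exact ⟨hm.mem_parts hA (Ne.symm hXAB.1) (Ne.symm hYAB.1),
      hm.mem_parts hB (Ne.symm hXAB.2) (Ne.symm hYAB.2)⟩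

theorem IsDSeq.homogeneous_of_isFrozenPair (hC : IsDSeq G C 1) (hG : IsPrimeGraph G) {j : ℕ}
    (hj : 1 ≤ j) (hjn : j ≤ Fintype.card V) (hA : A ∈ (C.parts j).parts)
    (hB : B ∈ (C.parts j).parts) (hAB : A ≠ B) (hfrozen : IsFrozenPair G A B) :
    Homogeneous G A B := by
  by_contra hred
  have survives : ∀ k < j, A ∈ (C.parts (j - k)).parts ∧ B ∈ (C.parts (j - k)).parts := by
    intro k hk
    induction k with
    | zero => exact ⟨hA, hB⟩
    | succ k ih =>
      obtain ⟨hA', hB'⟩ := ih (by omega)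
      rw [show j - k = j - (k + 1) + 1 by omega] at hA' hB'
      exact hC.mem_parts_of_isFrozenPair hG (by omega) (by omega) hA' hB' hAB hred hfrozen
  obtain ⟨hA1, hB1⟩ := survives (j - 1) (by omega)
  rw [show j - (j - 1) = 1 by omega] at hA1 hB1
  exact hAB (card_le_one.mp (C.parts_card 1 le_rfl (by omega)).le _ hA1 _ hB1)

theorem tww_eq_zero_of_card_le_two (C : ContractionSeq V) (h : Fintype.card V ≤ 2) :
    tww G = 0 := by
  refine Nat.sInf_eq_zero.mpr (Or.inl ⟨C, fun i hi hin X hX => ?_⟩)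
  rw [nonpos_iff_eq_zero, Set.ncard_eq_zero]
  refine Set.eq_empty_of_forall_notMem ?_
  rintro Y ⟨hY, hYX, hXY⟩
  rcases (show i = 1 ∨ i = Fintype.card V by omega) with rfl | rfl
  · exact hYX (card_le_one.mp (C.parts_card 1 le_rfl hin).le _ hY _ hX)
  · obtain ⟨x, rfl⟩ := card_eq_one.mp (C.parts_top X hX)
    obtain ⟨y, rfl⟩ := card_eq_one.mp (C.parts_top Y hY)
    exact hXY (homogeneous_singleton x y)

theorem ContractionSeq.singleton_mem_parts_pred {u v x : V} (huv : u ≠ v)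
    (hfirst : ({u, v} : Finset V) ∈ (C.parts (Fintype.card V - 1)).parts) (hxu : x ≠ u)
    (hxv : x ≠ v) : ({x} : Finset V) ∈ (C.parts (Fintype.card V - 1)).parts := by
  have hn : 2 ≤ Fintype.card V := Fintype.one_lt_card_iff.mpr ⟨u, v, huv⟩
  obtain ⟨X, -, Y, -, -, hm⟩ := C.exists_isMerge (i := Fintype.card V - 1) (by omega) (by omega)
  rw [Nat.sub_add_cancel (by omega : 1 ≤ Fintype.card V)] at hm
  have singleton_of_ne : ∀ T ∈ (C.parts (Fintype.card V - 1)).parts, T ≠ X ∪ Y → T.card = 1 :=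
    fun T hT hTXY => C.parts_top T (hm.mem_parts_of_ne_union hT hTXY)
  obtain ⟨T, hT, hxT⟩ := (C.parts _).exists_mem (mem_univ x)
  have hTXY : T ≠ X ∪ Y := by
    rintro rfl
    have huvT : ({u, v} : Finset V) ≠ X ∪ Y := fun h => by
      rw [← h, mem_insert, mem_singleton] at hxT
      exact hxT.elim hxu hxv
    exact absurd (singleton_of_ne _ hfirst huvT) (by rw [card_pair huv]; decide)
  obtain ⟨t, rfl⟩ := card_eq_one.mp (singleton_of_ne T hT hTXY)
  rwa [mem_singleton.mp hxT]

theorem IsDSeq.adj_iff_adj_of_mem_parts_pred (hC : IsDSeq G C 1) {u v w : V} (huv : u ≠ v)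
    (hfirst : ({u, v} : Finset V) ∈ (C.parts (Fintype.card V - 1)).parts) (hwu : w ≠ u)
    (hwv : w ≠ v) (hsplit : ¬ (G.Adj w u ↔ G.Adj w v)) :
    ∀ x, x ≠ u → x ≠ v → x ≠ w → (G.Adj x u ↔ G.Adj x v) := by
  intro x hxu hxv hxw
  by_contra hx
  have hn : 2 ≤ Fintype.card V := Fintype.one_lt_card_iff.mpr ⟨u, v, huv⟩
  have ne_pair : ∀ {z}, z ≠ u → ({z} : Finset V) ≠ {u, v} := fun hzu h =>
    hzu (mem_singleton.mp (h ▸ mem_insert_self u {v})).symm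
  exact hxw (singleton_inj.mp ((hC _ (by omega) (by omega)).eq_of_not_homogeneous hfirst
    (C.singleton_mem_parts_pred huv hfirst hxu hxv) (C.singleton_mem_parts_pred huv hfirst hwu hwv)
    (ne_pair hxu) (ne_pair hwu) (homogeneous_pair_singleton_iff.not.mpr hx)
    (homogeneous_pair_singleton_iff.not.mpr hsplit)))

end Sequence

section Box

variable {G : SimpleGraph V} {u v w : V} {R : Set V}

/-- The picture when the vertices `R` lie strictly between `u` and `v` in both orders of a
realiser and `w` is the only vertex splitting `{u, v}`: then `{u, v} ∪ R` is a module of `G - w`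
(`adj_outer`), and the vertices of `R` see `u` and `v` as these see each other. -/
structure IsBox (G : SimpleGraph V) (u v w : V) (R : Set V) : Prop where
  adj_w_u : G.Adj w u
  not_adj_w_v : ¬ G.Adj w v
  w_ne_v : w ≠ v
  u_notMem : u ∉ R
  v_notMem : v ∉ R
  w_notMem : w ∉ R
  nonempty : R.Nonempty
  adj_u_inner : ∀ x ∈ R, G.Adj u x ↔ G.Adj u v
  adj_v_inner : ∀ x ∈ R, G.Adj v x ↔ G.Adj v u
  adj_outer : ∀ y ∉ R, y ≠ u → y ≠ v → y ≠ w →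
    (G.Adj y v ↔ G.Adj y u) ∧ ∀ x ∈ R, G.Adj y x ↔ G.Adj y u

namespace IsBox

theorem ne (hB : IsBox G u v w R) : u ≠ v := fun h => hB.not_adj_w_v (h ▸ hB.adj_w_u)

theorem ne_of_mem (hB : IsBox G u v w R) {x : V} (hx : x ∈ R) : x ≠ u ∧ x ≠ v ∧ x ≠ w :=
  ⟨fun h => hB.u_notMem (h ▸ hx), fun h => hB.v_notMem (h ▸ hx), fun h => hB.w_notMem (h ▸ hx)⟩

theorem exists_inner_adj (hB : IsBox G u v w R) (hG : IsPrimeGraph G) : ∃ x ∈ R, G.Adj w x := by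
  by_contra! h
  obtain ⟨x, hx⟩ := hB.nonempty
  refine hG.not_isModule (Set.mem_insert v R) (Set.mem_insert_of_mem v hx)
    (hB.ne_of_mem hx).2.1.symm (c := u) (fun hu => hu.elim hB.ne hB.u_notMem)
    (isModule_of_forall_adj_iff (a := v) fun z hz m hm => ?_)
  rw [Set.mem_insert_iff, not_or] at hz
  rcases hm with rfl | hm
  · rfl
  by_cases hzu : z = u
  · subst hzu
    exact hB.adj_u_inner m hm
  by_cases hzw : z = w
  · subst hzw
    exact iff_of_false (h m hm) hB.not_adj_w_v
  have hout := hB.adj_outer z hz.2 hzu hz.1 hzw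
  exact (hout.2 m hm).trans hout.1.symm

theorem exists_inner_not_adj (hB : IsBox G u v w R) (hG : IsPrimeGraph G) :
    ∃ x ∈ R, ¬ G.Adj w x := by
  by_contra! h
  obtain ⟨x, hx⟩ := hB.nonempty
  refine hG.not_isModule (Set.mem_insert u R) (Set.mem_insert_of_mem u hx) (hB.ne_of_mem hx).1.symm
    (c := v) (fun hv => hv.elim hB.ne.symm hB.v_notMem)
    (isModule_of_forall_adj_iff (a := u) fun z hz m hm => ?_)
  rw [Set.mem_insert_iff, not_or] at hz
  rcases hm with rfl | hm
  · rfl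
  by_cases hzv : z = v
  · subst hzv
    exact hB.adj_v_inner m hm
  by_cases hzw : z = w
  · subst hzw
    exact iff_of_true (h m hm) hB.adj_w_u
  exact (hB.adj_outer z hz.2 hz.1 hzv hzw).2 m hm

theorem exists_outer_splitter (hB : IsBox G u v w R) (hG : IsPrimeGraph G) :
    ∃ y ∉ R, y ≠ u ∧ y ≠ v ∧ y ≠ w ∧ ¬ (G.Adj y w ↔ G.Adj y u) := by
  by_contra! h
  obtain ⟨x, hx⟩ := hB.nonempty
  have hwu : w ≠ u := hB.adj_w_u.ne
  have huv : u ≠ v := hB.ne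
  by_cases hadj : G.Adj u v
  · refine hG.not_isModule (M := insert v (insert w R)) (Set.mem_insert v _)
      (Set.mem_insert_of_mem v (Set.mem_insert w R)) hB.w_ne_v.symm (c := u) (by
        simp only [Set.mem_insert_iff, not_or]
        exact ⟨huv, hwu.symm, hB.u_notMem⟩)
      (isModule_of_forall_adj_iff (a := v) fun z hz m hm => ?_)
    simp only [Set.mem_insert_iff, not_or] at hz hm
    by_cases hzu : z = u
    · subst hzu
      rcases hm with rfl | rfl | hm
      exacts [Iff.rfl, iff_of_true hB.adj_w_u.symm hadj, hB.adj_u_inner m hm]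
    have hout := hB.adj_outer z hz.2.2 hzu hz.1 hz.2.1
    rcases hm with rfl | rfl | hm
    exacts [Iff.rfl, (h z hz.2.2 hzu hz.1 hz.2.1).trans hout.1.symm,
      (hout.2 m hm).trans hout.1.symm]
  · refine hG.not_isModule (M := insert u (insert w R)) (Set.mem_insert u _)
      (Set.mem_insert_of_mem u (Set.mem_insert w R)) hwu.symm (c := v) (by
        simp only [Set.mem_insert_iff, not_or]
        exact ⟨huv.symm, hB.w_ne_v.symm, hB.v_notMem⟩)
      (isModule_of_forall_adj_iff (a := u) fun z hz m hm => ?_)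
    simp only [Set.mem_insert_iff, not_or] at hz hm
    by_cases hzv : z = v
    · subst hzv
      rcases hm with rfl | rfl | hm
      exacts [Iff.rfl, iff_of_false (fun h => hB.not_adj_w_v h.symm) (fun h => hadj h.symm),
        hB.adj_v_inner m hm]
    rcases hm with rfl | rfl | hm
    exacts [Iff.rfl, h z hz.2.2 hz.1 hzv hz.2.1, (hB.adj_outer z hz.2.2 hz.1 hzv hz.2.1).2 m hm]

variable [DecidableEq V]

theorem not_canAbsorb_pair (hB : IsBox G u v w R) (hG : IsPrimeGraph G) :
    ¬ CanAbsorb G {u, v} {w} := by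
  rintro ⟨f, hf, htwin⟩
  simp only [mem_union, mem_insert, mem_singleton, not_or] at hf htwin
  obtain ⟨⟨hfu, hfv⟩, hfw⟩ := hf
  have twin : ∀ z, z ≠ u → z ≠ v → z ≠ w → z ≠ f →
      (G.Adj z u ↔ G.Adj z f) ∧ (G.Adj z v ↔ G.Adj z f) := fun z hzu hzv hzw hzf =>
    ⟨htwin u (Or.inl rfl) z ⟨⟨hzu, hzv⟩, hzw⟩ hzf, htwin v (Or.inr rfl) z ⟨⟨hzu, hzv⟩, hzw⟩ hzf⟩
  by_cases hfu' : G.Adj u f ↔ G.Adj u v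
  · have hfv' : G.Adj v f ↔ G.Adj v u := by
      by_cases hfR : f ∈ R
      · exact hB.adj_v_inner f hfR
      · rw [G.adj_comm v f, (hB.adj_outer f hfR hfu hfv hfw).1, G.adj_comm f u, hfu', G.adj_comm]
    -- `{u, f}` or `{v, f}` is a module, depending on how `w` sees `f`
    by_cases hwf : G.Adj w f
    · refine hG.not_isModule (Set.mem_insert u {f}) (Set.mem_insert_of_mem u rfl) (Ne.symm hfu)
        (c := v) (by simp [hB.ne.symm, Ne.symm hfv]) (isModule_pair fun z hzu hzf => ?_)
      by_cases hzv : z = v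
      · subst hzv
        exact hfv'.symm
      by_cases hzw : z = w
      · subst hzw
        exact iff_of_true hB.adj_w_u hwf
      exact (twin z hzu hzv hzw hzf).1
    · refine hG.not_isModule (Set.mem_insert v {f}) (Set.mem_insert_of_mem v rfl) (Ne.symm hfv)
        (c := u) (by simp [hB.ne, Ne.symm hfu]) (isModule_pair fun z hzv hzf => ?_)
      by_cases hzu : z = u
      · subst hzu
        exact hfu'.symm
      by_cases hzw : z = w
      · subst hzw
        exact iff_of_false hB.not_adj_w_v hwf
      exact (twin z hzu hzv hzw hzf).2
  · have hfR : f ∉ R := fun hfR => hfu' (hB.adj_u_inner f hfR)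
    obtain ⟨x, hx⟩ := hB.nonempty
    obtain ⟨hxu, hxv, hxw⟩ := hB.ne_of_mem hx
    apply hfu'
    calc G.Adj u f ↔ G.Adj f u := G.adj_comm u f
      _ ↔ G.Adj f x := ((hB.adj_outer f hfR hfu hfv hfw).2 x hx).symm
      _ ↔ G.Adj x f := G.adj_comm f x
      _ ↔ G.Adj x u := (twin x hxu hxv hxw fun h => hfR (h ▸ hx)).1.symm
      _ ↔ G.Adj u x := G.adj_comm x u
      _ ↔ G.Adj u v := hB.adj_u_inner x hx

theorem not_canAbsorb_singleton (hB : IsBox G u v w R) (hG : IsPrimeGraph G) :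
    ¬ CanAbsorb G {w} {u, v} := by
  rintro ⟨f, hf, htwin⟩
  simp only [mem_union, mem_insert, mem_singleton, not_or, forall_eq] at hf htwin
  obtain ⟨hfw, hfu, hfv⟩ := hf
  have twin : ∀ z, z ≠ u → z ≠ v → z ≠ w → z ≠ f → (G.Adj z w ↔ G.Adj z f) :=
    fun z hzu hzv hzw hzf => htwin z ⟨hzw, hzu, hzv⟩ hzf
  by_cases hfR : f ∈ R
  · obtain ⟨y, hyR, hyu, hyv, hyw, hy⟩ := hB.exists_outer_splitter hG
    exact hy ((twin y hyu hyv hyw fun h => hyR (h ▸ hfR)).trans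
      ((hB.adj_outer y hyR hyu hyv hyw).2 f hfR))
  · obtain ⟨x, hx, hwx⟩ := hB.exists_inner_adj hG
    obtain ⟨x', hx', hwx'⟩ := hB.exists_inner_not_adj hG
    obtain ⟨hxu, hxv, hxw⟩ := hB.ne_of_mem hx
    obtain ⟨hx'u, hx'v, hx'w⟩ := hB.ne_of_mem hx'
    have hout := (hB.adj_outer f hfR hfu hfv hfw).2
    refine hwx' ((?_ : G.Adj w x ↔ G.Adj w x').mp hwx)
    calc G.Adj w x ↔ G.Adj x w := G.adj_comm w x
      _ ↔ G.Adj x f := twin x hxu hxv hxw fun h => hfR (h ▸ hx)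
      _ ↔ G.Adj f x := G.adj_comm x f
      _ ↔ G.Adj f x' := (hout x hx).trans (hout x' hx').symm
      _ ↔ G.Adj x' f := G.adj_comm f x'
      _ ↔ G.Adj x' w := (twin x' hx'u hx'v hx'w fun h => hfR (h ▸ hx')).symm
      _ ↔ G.Adj w x' := G.adj_comm x' w

theorem splitters_nontrivial (hB : IsBox G u v w R) (hG : IsPrimeGraph G) :
    (splitters G ({u, v} ∪ {w})).Nontrivial := by
  obtain ⟨y, hyR, hyu, hyv, hyw, hy⟩ := hB.exists_outer_splitter hG
  obtain ⟨x, hx, hxsplit⟩ : ∃ x ∈ R, ¬ (G.Adj x w ↔ G.Adj x u) := by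
    by_cases hadj : G.Adj u v
    · obtain ⟨x, hx, hwx⟩ := hB.exists_inner_not_adj hG
      exact ⟨x, hx, fun h => hwx (h.mpr ((hB.adj_u_inner x hx).mpr hadj).symm).symm⟩
    · obtain ⟨x, hx, hwx⟩ := hB.exists_inner_adj hG
      exact ⟨x, hx, fun h => hadj ((hB.adj_u_inner x hx).mp (h.mp hwx.symm).symm)⟩
  have notMem : ∀ {z}, z ≠ u → z ≠ v → z ≠ w → z ∉ ({u, v} ∪ {w} : Finset V) := by
    intro z hzu hzv hzw
    simp [hzu, hzv, hzw]
  obtain ⟨hxu, hxv, hxw⟩ := hB.ne_of_mem hx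
  exact ⟨x, mem_splitters (notMem hxu hxv hxw) (by simp) (by simp) hxsplit,
    y, mem_splitters (notMem hyu hyv hyw) (by simp) (by simp) hy, fun h => hyR (h ▸ hx)⟩

theorem isFrozenPair (hB : IsBox G u v w R) (hG : IsPrimeGraph G) : IsFrozenPair G {u, v} {w} :=
  ⟨hB.not_canAbsorb_pair hG, hB.not_canAbsorb_singleton hG, hB.splitters_nontrivial hG⟩

end IsBox

end Box

section Realiser

namespace StrictlyBetween

variable {n : ℕ} {π : V ≃ Fin n} {u v x y : V}

theorem symm (h : StrictlyBetween π u x v) : StrictlyBetween π v x u := Or.symm h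

theorem ne_left (h : StrictlyBetween π u x v) : x ≠ u := by
  rintro rfl
  unfold StrictlyBetween at h
  omega

theorem ne_right (h : StrictlyBetween π u x v) : x ≠ v := h.symm.ne_left

theorem lt_iff_lt (h : StrictlyBetween π u x v) : π u < π x ↔ π u < π v := by
  unfold StrictlyBetween at h
  omega

theorem lt_iff_lt_of_not_strictlyBetween (hx : StrictlyBetween π u x v)
    (hy : ¬ StrictlyBetween π u y v) (hyu : y ≠ u) : π y < π x ↔ π y < π u := by
  have := π.injective.ne hyu
  unfold StrictlyBetween at hx hy
  omega

end StrictlyBetween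

variable [Fintype V]

open Classical in
theorem card_strictlyBetween_add_one {n : ℕ} (π : V ≃ Fin n) {u v : V} (huv : u ≠ v) :
    #{x | StrictlyBetween π u x v} + 1 = ((π u : ℤ) - π v).natAbs := by
  wlog h : π u < π v generalizing u v
  · have := this huv.symm (by have := π.injective.ne huv; omega)
    rw [filter_congr (p := (StrictlyBetween π u · v)) (q := (StrictlyBetween π v · u))
      fun x _ => or_comm]
    omega
  have hcard : #{x | StrictlyBetween π u x v} = #((Ioo (π u) (π v)).map π.symm.toEmbedding) := by
    congr 1
    ext x
    rw [mem_filter, mem_map_equiv, Equiv.symm_symm, mem_Ioo]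
    unfold StrictlyBetween
    simp only [mem_univ, true_and]
    omega
  rw [hcard, card_map, Fin.card_Ioo]
  omega

theorem natAbs_sub_eq_one {n : ℕ} {π : V ≃ Fin n} {u v : V} (huv : u ≠ v)
    (h : ∀ x, ¬ StrictlyBetween π u x v) : ((π u : ℤ) - π v).natAbs = 1 := by
  classical
  rw [← card_strictlyBetween_add_one π huv, filter_false_of_mem fun x _ => h x, card_empty]

theorem natAbs_sub_eq_two {n : ℕ} {π : V ≃ Fin n} {u v w : V} (huv : u ≠ v)
    (hw : StrictlyBetween π u w v) (h : ∀ x, x ≠ w → ¬ StrictlyBetween π u x v) :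
    ((π u : ℤ) - π v).natAbs = 2 := by
  classical
  rw [← card_strictlyBetween_add_one π huv, card_eq_one.mpr ⟨w, ?_⟩]
  ext x
  simp only [mem_filter, mem_univ, true_and, mem_singleton]
  exact ⟨fun hx => by_contra fun hxw => h x hxw hx, fun hxw => hxw ▸ hw⟩

variable {G : SimpleGraph V} {σ τ : V ≃ Fin (Fintype.card V)}

namespace IsRealiser

theorem adj_iff (hreal : IsRealiser G σ τ) {a b : V} (hab : a ≠ b) :
    G.Adj a b ↔ (σ a < σ b ↔ τ b < τ a) := by
  have := σ.injective.ne hab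
  have := τ.injective.ne hab
  rw [hreal a b]
  omega

theorem adj_iff_adj (hreal : IsRealiser G σ τ) {a b c : V} (hab : a ≠ b) (hac : a ≠ c)
    (hσ : σ a < σ b ↔ σ a < σ c) (hτ : τ a < τ b ↔ τ a < τ c) : G.Adj a b ↔ G.Adj a c := by
  have := τ.injective.ne hab
  have := τ.injective.ne hac
  rw [hreal.adj_iff hab, hreal.adj_iff hac]
  omega

theorem adj_iff_adj_iff_strictlyBetween (hreal : IsRealiser G σ τ) {u v x : V} (hxu : x ≠ u)
    (hxv : x ≠ v) :
    (G.Adj x u ↔ G.Adj x v) ↔ (StrictlyBetween σ u x v ↔ StrictlyBetween τ u x v) := by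
  have := σ.injective.ne hxu
  have := σ.injective.ne hxv
  have := τ.injective.ne hxu
  have := τ.injective.ne hxv
  rw [hreal.adj_iff hxu, hreal.adj_iff hxv]
  unfold StrictlyBetween
  omega

theorem isBox (hreal : IsRealiser G σ τ) {u v w x₀ : V} (hwu : G.Adj w u) (hwv : ¬ G.Adj w v)
    (hw : w ≠ v) (hunique : ∀ x, x ≠ u → x ≠ v → x ≠ w → (G.Adj x u ↔ G.Adj x v))
    (hσ : StrictlyBetween σ u x₀ v) (hτ : StrictlyBetween τ u x₀ v) :
    IsBox G u v w {x | x ≠ w ∧ StrictlyBetween σ u x v ∧ StrictlyBetween τ u x v} := by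
  have huv : u ≠ v := fun h => hwv (h ▸ hwu)
  refine ⟨hwu, hwv, hw, fun h => h.2.1.ne_left rfl, fun h => h.2.1.ne_right rfl, fun h => h.1 rfl,
    ⟨x₀, ?_, hσ, hτ⟩, fun x hx => ?_, fun x hx => ?_, fun y hy hyu hyv hyw => ?_⟩
  · rintro rfl
    exact hwv (((hreal.adj_iff_adj_iff_strictlyBetween hwu.ne hw).mpr (iff_of_true hσ hτ)).mp hwu)
  · exact hreal.adj_iff_adj hx.2.1.ne_left.symm huv hx.2.1.lt_iff_lt hx.2.2.lt_iff_lt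
  · exact hreal.adj_iff_adj hx.2.1.ne_right.symm huv.symm hx.2.1.symm.lt_iff_lt
      hx.2.2.symm.lt_iff_lt
  · have hσy : ¬ StrictlyBetween σ u y v ∧ ¬ StrictlyBetween τ u y v := by
      have := (hreal.adj_iff_adj_iff_strictlyBetween hyu hyv).mp (hunique y hyu hyv hyw)
      have := fun h => hy ⟨hyw, h⟩
      tauto
    exact ⟨(hunique y hyu hyv hyw).symm, fun x hx => hreal.adj_iff_adj (fun h => hy (h ▸ hx)) hyu
      (hx.2.1.lt_iff_lt_of_not_strictlyBetween hσy.1 hyu)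
      (hx.2.2.lt_iff_lt_of_not_strictlyBetween hσy.2 hyu)⟩

theorem isFrozenPair [DecidableEq V] (hreal : IsRealiser G σ τ) (hG : IsPrimeGraph G)
    {u v w x₀ : V} (hwu : w ≠ u) (hwv : w ≠ v) (hsplit : ¬ (G.Adj w u ↔ G.Adj w v))
    (hunique : ∀ x, x ≠ u → x ≠ v → x ≠ w → (G.Adj x u ↔ G.Adj x v))
    (hσ : StrictlyBetween σ u x₀ v) (hτ : StrictlyBetween τ u x₀ v) :
    IsFrozenPair G {u, v} {w} := by
  by_cases hadj : G.Adj w u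
  · have hnadj : ¬ G.Adj w v := fun h => hsplit (iff_of_true hadj h)
    exact (hreal.isBox hadj hnadj hwv hunique hσ hτ).isFrozenPair hG
  · rw [pair_comm]
    exact (hreal.isBox ((not_iff.mp hsplit).mp hadj) hadj hwu
      (fun x hxv hxu hxw => (hunique x hxu hxv hxw).symm) hσ.symm hτ.symm).isFrozenPair hG

theorem natAbs_sub_of_forall_not_strictlyBetween_both (hreal : IsRealiser G σ τ) {u v w : V}
    (huv : u ≠ v) (hwu : w ≠ u) (hwv : w ≠ v) (hsplit : ¬ (G.Adj w u ↔ G.Adj w v))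
    (hunique : ∀ x, x ≠ u → x ≠ v → x ≠ w → (G.Adj x u ↔ G.Adj x v))
    (hbox : ∀ x, StrictlyBetween σ u x v → ¬ StrictlyBetween τ u x v) :
    (((σ u : ℤ) - (σ v : ℤ)).natAbs = 1 ∧ ((τ u : ℤ) - (τ v : ℤ)).natAbs = 2) ∨
    (((σ u : ℤ) - (σ v : ℤ)).natAbs = 2 ∧ ((τ u : ℤ) - (τ v : ℤ)).natAbs = 1) := by
  have only_w : ∀ x, x ≠ w → ¬ StrictlyBetween σ u x v ∧ ¬ StrictlyBetween τ u x v := by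
    intro x hxw
    by_cases hxu : x = u
    · exact ⟨fun h => h.ne_left hxu, fun h => h.ne_left hxu⟩
    by_cases hxv : x = v
    · exact ⟨fun h => h.ne_right hxv, fun h => h.ne_right hxv⟩
    have := (hreal.adj_iff_adj_iff_strictlyBetween hxu hxv).mp (hunique x hxu hxv hxw)
    have := hbox x
    tauto
  have hw := (hreal.adj_iff_adj_iff_strictlyBetween hwu hwv).not.mp hsplit
  by_cases hwσ : StrictlyBetween σ u w v
  · refine Or.inr ⟨natAbs_sub_eq_two huv hwσ fun x hxw => (only_w x hxw).1,
      natAbs_sub_eq_one huv fun x hx => ?_⟩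
    by_cases hxw : x = w
    · exact hw (iff_of_true hwσ (hxw ▸ hx))
    · exact (only_w x hxw).2 hx
  · have hwτ : StrictlyBetween τ u w v := (not_iff.mp hw).mp hwσ
    refine Or.inl ⟨natAbs_sub_eq_one huv fun x hx => ?_,
      natAbs_sub_eq_two huv hwτ fun x hxw => (only_w x hxw).2⟩
    by_cases hxw : x = w
    · exact hwσ (hxw ▸ hx)
    · exact (only_w x hxw).1 hx

end IsRealiser

end Realiser

end TwinWidthOne

/-- In a prime graph of twin-width 1 with realiser `(σ, τ)`, the two vertices
`u, v` contracted first in any 1-contraction sequence are consecutive in one of the two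
orderings and have exactly one vertex strictly between them in the other. -/
theorem stmt_4 {V : Type*} [Fintype V] [DecidableEq V] (G : SimpleGraph V)
    (hprime : IsPrimeGraph G) (htww : tww G = 1)
    (σ τ : V ≃ Fin (Fintype.card V)) (hreal : IsRealiser G σ τ)
    (C : ContractionSeq V) (hC : IsDSeq G C 1)
    (u v : V) (huv : u ≠ v)
    (hfirst : ({u, v} : Finset V) ∈ (C.parts (Fintype.card V - 1)).parts) :
    (((σ u : ℤ) - (σ v : ℤ)).natAbs = 1 ∧ ((τ u : ℤ) - (τ v : ℤ)).natAbs = 2) ∨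
    (((σ u : ℤ) - (σ v : ℤ)).natAbs = 2 ∧ ((τ u : ℤ) - (τ v : ℤ)).natAbs = 1) := by
  have h3 : 3 ≤ Fintype.card V := by
    by_contra h
    have := tww_eq_zero_of_card_le_two (G := G) C (by omega)
    omega
  obtain ⟨w, hwu, hwv, hsplit⟩ := hprime.exists_splitter huv h3
  have hunique := hC.adj_iff_adj_of_mem_parts_pred huv hfirst hwu hwv hsplit
  by_cases hbox : ∃ x, StrictlyBetween σ u x v ∧ StrictlyBetween τ u x v
  · obtain ⟨x₀, hσ, hτ⟩ := hbox
    have hne : ({u, v} : Finset V) ≠ {w} := fun h =>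
      hwu (mem_singleton.mp (h ▸ mem_insert_self u {v})).symm
    exact absurd (hC.homogeneous_of_isFrozenPair hprime (by omega) (by omega) hfirst
      (C.singleton_mem_parts_pred huv hfirst hwu hwv) hne
      (hreal.isFrozenPair hprime hwu hwv hsplit hunique hσ hτ))
      (homogeneous_pair_singleton_iff.not.mpr hsplit)
  · push Not at hbox
    exact hreal.natAbs_sub_of_forall_not_strictlyBetween_both huv hwu hwv hsplit hunique hbox
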